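/- arXiv:2503.10169 — 4 statements merged into one kernel-verified Lean document; each statement's English description precedes it below -/
import Mathlib

section
/- For every integer n ≥ 2, the OLA encoding Φ : RBT_n → C_{n−1} and the OLA decoding Ψ : C_{n−1} → RBT_n are mutually inverse bijections; that is, Ψ(Φ(T)) = T for every T ∈ RBT_n and Φ(Ψ(v)) = v for every v ∈ C_{n−1}. -/
/-- A rooted binary tree whose leaves carry natural-number labels. -/
inductive BTree : Type
  | leaf : ℕ → BTree
  | node : BTree → BTree → BTree
  deriving DecidableEq

namespace BTree

/-- The minimum leaf label in a tree (the "clade-founder" label of its root). -/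
def minLeaf : BTree → ℕ
  | leaf j => j
  | node l r => min (minLeaf l) (minLeaf r)

/-- The label of the root node of a subtree: a leaf carries its own label,
and an internal node carries its canonical label `-CS`, where `CS` is the
"clade-splitter" label, i.e. the maximum of the children's clade-founder labels. -/
def nodeLabel : BTree → ℤ
  | leaf j => (j : ℤ)
  | node l r => -(max (minLeaf l) (minLeaf r) : ℤ)

/-- The multiset of leaf labels of a tree. -/
def leafMultiset : BTree → Multiset ℕ
  | leaf j => {j}
  | node l r => leafMultiset l + leafMultiset r

/-- Canonical form for representing an *unordered* tree by an ordered one: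
at each internal node the left subtree contains the smaller minimum leaf label. -/
def Canonical : BTree → Prop
  | leaf _ => True
  | node l r => minLeaf l < minLeaf r ∧ Canonical l ∧ Canonical r

/-- `IsRBT n T` : `T` is (the canonical representative of) a leaf-ordered rooted
binary tree on `n` leaves, bijectively labeled `0, 1, ..., n-1`. -/
def IsRBT (n : ℕ) (T : BTree) : Prop :=
  Canonical T ∧ leafMultiset T = Multiset.range n

/-- Number of leaves. -/
def numLeaves : BTree → ℕ
  | leaf _ => 1
  | node l r => numLeaves l + numLeaves r

/-- Delete the leaf labeled `i` (together with its parent); return the label of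
its sister node together with the remaining tree. -/
def deleteLeaf (i : ℕ) : BTree → Option (ℤ × BTree)
  | leaf _ => none
  | node l r =>
    if l = leaf i then some (nodeLabel r, r)
    else if r = leaf i then some (nodeLabel l, l)
    else
      match deleteLeaf i l with
      | some (a, l') => some (a, node l' r)
      | none =>
        match deleteLeaf i r with
        | some (a, r') => some (a, node l r')
        | none => none

/-- Deconstruct a tree by removing leaves `m, m-1, ..., 1` in reverse order,
recording the (leaf or canonical internal) label of the sister of each removed leaf. -/
def olaEncodeAux : ℕ → BTree → List ℤ
  | 0, _ => []
  | m + 1, T =>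
    match deleteLeaf (m + 1) T with
    | some (a, T') => olaEncodeAux m T' ++ [a]
    | none => []

/-- The OLA (ordered leaf attachment) encoding `(a_1, ..., a_{n-1})` of a tree on
`n` leaves: `a_i` is the label of the node that is the sister of leaf `i` at the
step when leaf `i` is attached. -/
def olaEncode (T : BTree) : List ℤ := olaEncodeAux (numLeaves T - 1) T

/-- Attach a new leaf labeled `i` as the sister of the node whose label is `a`
(subdividing that node's parent edge). -/
def attachAt (a : ℤ) (i : ℕ) : BTree → BTree
  | leaf j => if (j : ℤ) = a then node (leaf j) (leaf i) else leaf j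
  | node l r =>
    if nodeLabel (node l r) = a then node (node l r) (leaf i)
    else node (attachAt a i l) (attachAt a i r)

/-- Helper for OLA decoding: attach leaves `i, i+1, ...` at the recorded labels. -/
def olaDecodeAux : BTree → ℕ → List ℤ → BTree
  | T, _, [] => T
  | T, i, a :: rest => olaDecodeAux (attachAt a i T) (i + 1) rest

/-- The OLA decoding: starting from the single leaf `0`, attach leaf `i` as the
sister of the node labeled `a_i`, for `i = 1, ..., n-1`. -/
def olaDecode (v : List ℤ) : BTree := olaDecodeAux (leaf 0) 1 v

end BTree

/-- `ValidCode v` : membership of `v = (a_1, ..., a_m)` in `C_m`, i.e. the entry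
`a_i` (at list index `i - 1`) satisfies `-i < a_i < i`. -/
def ValidCode (v : List ℤ) : Prop :=
  ∀ i : Fin v.length, -((i : ℤ) + 1) < v.get i ∧ v.get i < (i : ℤ) + 1

/-- The OLA distance: the Hamming distance between the OLA encodings. -/
def olaDist (T T' : BTree) : ℕ :=
  ((BTree.olaEncode T).zip (BTree.olaEncode T')).countP fun p => decide (p.1 ≠ p.2)

/-- One-hole contexts, marking the position of a subtree/edge in a tree. -/
inductive Ctx : Type
  | hole : Ctx
  | left : Ctx → BTree → Ctx
  | right : BTree → Ctx → Ctx
  deriving DecidableEq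

/-- Fill the hole of a context with a tree. -/
def Ctx.fill : Ctx → BTree → BTree
  | .hole, T => T
  | .left c r, T => BTree.node (Ctx.fill c T) r
  | .right l c, T => BTree.node l (Ctx.fill c T)

/-- Composition of contexts: `(c.comp d).fill X = c.fill (d.fill X)`. -/
def Ctx.comp : Ctx → Ctx → Ctx
  | .hole, d => d
  | .left c r, d => .left (Ctx.comp c d) r
  | .right l c, d => .right l (Ctx.comp c d)

/-- Equality of ordered binary trees as *unordered* trees (children may be swapped
at every internal node). -/
def TreeEquiv : BTree → BTree → Prop
  | .leaf i, .leaf j => i = j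
  | .node l r, .node l' r' =>
      (TreeEquiv l l' ∧ TreeEquiv r r') ∨ (TreeEquiv l r' ∧ TreeEquiv r l')
  | _, _ => False

/-- `T'` is obtained from `T` by a single NNI move: contract an internal edge
(the edge above the subtree `node A B`) and re-resolve the resulting degree-4
node in one of the two other possible ways (unordered). -/
def IsNNIMove (T T' : BTree) : Prop :=
  ∃ (c : Ctx) (A B C : BTree),
    TreeEquiv T (Ctx.fill c (BTree.node (BTree.node A B) C)) ∧
    TreeEquiv T' (Ctx.fill c (BTree.node (BTree.node A C) B))

/-- `T'` is obtained from `T` by a single rooted SPR move: prune the subtree `S`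
(suppressing the resulting degree-2 node) and regraft it by subdividing an edge
of the remaining tree. -/
def IsSPRMove (T T' : BTree) : Prop :=
  ∃ (S : BTree) (c c' : Ctx) (X Y : BTree),
    TreeEquiv T (Ctx.fill c (BTree.node S X)) ∧
    Ctx.fill c X = Ctx.fill c' Y ∧
    TreeEquiv T' (Ctx.fill c' (BTree.node S Y))

/-- The multiset of canonical labels of the internal nodes of a tree. -/
def internalLabels : BTree → Multiset ℤ
  | .leaf _ => 0
  | .node l r => BTree.nodeLabel (BTree.node l r) ::ₘ (internalLabels l + internalLabels r)

/-- `prune k T` : delete all leaves with label `≥ k` and suppress the resulting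
degree-2 nodes (`none` if no leaf survives). -/
def prune (k : ℕ) : BTree → Option BTree
  | .leaf j => if j < k then some (.leaf j) else none
  | .node l r =>
    match prune k l, prune k r with
    | some l', some r' => some (.node l' r')
    | some l', none => some l'
    | none, some r' => some r'
    | none, none => none

namespace OLAProof

open BTree

/-- All node labels (leaves and internal nodes) of a tree. -/
def allLabels : BTree → Multiset ℤ
  | .leaf j => {(j : ℤ)}
  | .node l r => BTree.nodeLabel (.node l r) ::ₘ (allLabels l + allLabels r)

lemma minLeaf_mem (T : BTree) : T.minLeaf ∈ T.leafMultiset := by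
  induction T with
  | leaf j => simp [minLeaf, leafMultiset]
  | node l r ihl ihr =>
      simp only [minLeaf, leafMultiset, Multiset.mem_add]
      rcases le_total l.minLeaf r.minLeaf with h | h
      · rw [min_eq_left h]; exact Or.inl ihl
      · rw [min_eq_right h]; exact Or.inr ihr

lemma minLeaf_le (T : BTree) {j : ℕ} (h : j ∈ T.leafMultiset) : T.minLeaf ≤ j := by
  induction T with
  | leaf k => simp [leafMultiset] at h; simp [minLeaf, h]
  | node l r ihl ihr =>
      simp only [leafMultiset, Multiset.mem_add] at h
      rcases h with h | h
      · exact le_trans (min_le_left _ _) (ihl h)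
      · exact le_trans (min_le_right _ _) (ihr h)

lemma card_leafMultiset (T : BTree) : Multiset.card T.leafMultiset = T.numLeaves := by
  induction T with
  | leaf j => simp [leafMultiset, numLeaves]
  | node l r ihl ihr => simp [leafMultiset, numLeaves, ihl, ihr]

lemma eq_leaf_of_leafMultiset_singleton {T : BTree} {j : ℕ}
    (h : T.leafMultiset = {j}) : T = .leaf j := by
  cases T with
  | leaf k => simp [leafMultiset] at h; rw [h]
  | node l r =>
      exfalso
      have hl : 0 < Multiset.card l.leafMultiset :=
        Multiset.card_pos_iff_exists_mem.mpr ⟨_, minLeaf_mem l⟩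
      have hr : 0 < Multiset.card r.leafMultiset :=
        Multiset.card_pos_iff_exists_mem.mpr ⟨_, minLeaf_mem r⟩
      have := congrArg Multiset.card h
      simp [leafMultiset] at this
      omega

lemma nodeLabel_mem_allLabels (T : BTree) : T.nodeLabel ∈ allLabels T := by
  cases T with
  | leaf j => simp [allLabels, nodeLabel]
  | node l r => simp [allLabels]

lemma allLabels_eq {T : BTree} (hc : T.Canonical) :
    allLabels T + {-(T.minLeaf : ℤ)} =
      T.leafMultiset.map (fun j : ℕ => (j : ℤ)) + T.leafMultiset.map (fun j : ℕ => -(j : ℤ)) := by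
  induction T with
  | leaf j => simp [allLabels, minLeaf, leafMultiset]
  | node l r ihl ihr =>
      obtain ⟨hlr, hcl, hcr⟩ := hc
      have h1 : (BTree.node l r).minLeaf = l.minLeaf := min_eq_left hlr.le
      have h2 : (BTree.node l r).nodeLabel = -(r.minLeaf : ℤ) := by
        simp only [nodeLabel]
        have : ((l.minLeaf : ℤ)) ⊔ (r.minLeaf : ℤ) = (r.minLeaf : ℤ) :=
          max_eq_right (by exact_mod_cast hlr.le)
        push_cast
        rw [this]
      have key : allLabels (.node l r) + {-((BTree.node l r).minLeaf : ℤ)} =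
          (allLabels l + {-(l.minLeaf : ℤ)}) + (allLabels r + {-(r.minLeaf : ℤ)}) := by
        rw [h1]
        simp only [allLabels, h2, ← Multiset.singleton_add]
        abel
      rw [key, ihl hcl, ihr hcr]
      simp only [leafMultiset, Multiset.map_add]
      exact add_add_add_comm _ _ _ _

lemma count_map_cast (m : ℕ) (a : ℤ) :
    ((Multiset.range m).map (fun j : ℕ => (j : ℤ))).count a =
      if 0 ≤ a ∧ a < (m : ℤ) then 1 else 0 := by
  have hnd : ((Multiset.range m).map (fun j : ℕ => (j : ℤ))).Nodup :=
    (Multiset.nodup_range m).map (fun x y h => by exact_mod_cast h)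
  split_ifs with h
  · refine Multiset.count_eq_one_of_mem hnd ?_
    refine Multiset.mem_map.mpr ⟨a.toNat, Multiset.mem_range.mpr ?_, by omega⟩
    omega
  · refine Multiset.count_eq_zero_of_notMem ?_
    intro hmem
    obtain ⟨j, hj, hji⟩ := Multiset.mem_map.mp hmem
    rw [Multiset.mem_range] at hj
    omega

lemma count_map_neg (m : ℕ) (a : ℤ) :
    ((Multiset.range m).map (fun j : ℕ => -(j : ℤ))).count a =
      if -(m : ℤ) < a ∧ a ≤ 0 then 1 else 0 := by
  have hnd : ((Multiset.range m).map (fun j : ℕ => -(j : ℤ))).Nodup :=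
    (Multiset.nodup_range m).map (fun x y h => by
      have : (x : ℤ) = y := by omega
      exact_mod_cast this)
  split_ifs with h
  · refine Multiset.count_eq_one_of_mem hnd ?_
    refine Multiset.mem_map.mpr ⟨(-a).toNat, Multiset.mem_range.mpr ?_, by omega⟩
    omega
  · refine Multiset.count_eq_zero_of_notMem ?_
    intro hmem
    obtain ⟨j, hj, hji⟩ := Multiset.mem_map.mp hmem
    rw [Multiset.mem_range] at hj
    omega

lemma count_allLabels {T : BTree} {m : ℕ} (hc : T.Canonical)
    (hl : T.leafMultiset = Multiset.range m) (a : ℤ) :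
    (allLabels T).count a = if -(m : ℤ) < a ∧ a < (m : ℤ) then 1 else 0 := by
  have hm : 0 < m := by
    have := minLeaf_mem T
    rw [hl, Multiset.mem_range] at this
    omega
  have h0 : T.minLeaf = 0 := by
    have h0m : (0 : ℕ) ∈ T.leafMultiset := by
      rw [hl, Multiset.mem_range]; omega
    exact Nat.le_zero.mp (minLeaf_le T h0m)
  have E := allLabels_eq hc
  rw [hl, h0] at E
  have hthis := congrArg (Multiset.count a) E
  rw [Multiset.count_add, Multiset.count_add, Multiset.count_singleton,
      count_map_cast, count_map_neg] at hthis
  simp only [Nat.cast_zero, neg_zero] at hthis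
  split_ifs at hthis <;> split_ifs <;> omega

lemma nodup_allLabels {T : BTree} {m : ℕ} (hc : T.Canonical)
    (hl : T.leafMultiset = Multiset.range m) : (allLabels T).Nodup := by
  rw [Multiset.nodup_iff_count_le_one]
  intro a
  rw [count_allLabels hc hl a]
  split_ifs <;> omega

lemma mem_allLabels_iff {T : BTree} {m : ℕ} (hc : T.Canonical)
    (hl : T.leafMultiset = Multiset.range m) (a : ℤ) :
    a ∈ allLabels T ↔ (-(m : ℤ) < a ∧ a < (m : ℤ)) := by
  rw [← Multiset.count_pos, count_allLabels hc hl a]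
  split_ifs with h <;> simp [h]

end OLAProof
namespace OLAProof
open BTree

lemma attach_notMem {a : ℤ} {i : ℕ} {T : BTree} (h : a ∉ allLabels T) :
    T.attachAt a i = T := by
  induction T with
  | leaf j =>
      have : (j : ℤ) ≠ a := by simp [allLabels] at h; omega
      simp [attachAt, this]
  | node l r ihl ihr =>
      simp only [allLabels, Multiset.mem_cons, Multiset.mem_add] at h
      push_neg at h
      simp [attachAt, (Ne.symm h.1), ihl h.2.1, ihr h.2.2]

lemma delete_notMem {i : ℕ} {T : BTree} (h : i ∉ T.leafMultiset) :
    T.deleteLeaf i = none := by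
  induction T with
  | leaf j => simp [deleteLeaf]
  | node l r ihl ihr =>
      simp only [leafMultiset, Multiset.mem_add] at h
      push_neg at h
      have hl : l ≠ .leaf i := by
        intro he; apply h.1; rw [he]; simp [leafMultiset]
      have hr : r ≠ .leaf i := by
        intro he; apply h.2; rw [he]; simp [leafMultiset]
      simp [deleteLeaf, hl, hr, ihl h.1, ihr h.2]

lemma attach_at_root {a : ℤ} {i : ℕ} {S : BTree} (h : S.nodeLabel = a) :
    S.attachAt a i = .node S (.leaf i) := by
  cases S with
  | leaf j => simp only [nodeLabel] at h; simp [attachAt, h]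
  | node l r => simp [attachAt, h]

lemma attach_spec {i : ℕ} {a : ℤ} :
    ∀ {T : BTree}, T.Canonical → (∀ j ∈ T.leafMultiset, j < i) →
      (allLabels T).count a = 1 →
      (T.attachAt a i).Canonical ∧
      (T.attachAt a i).leafMultiset = i ::ₘ T.leafMultiset ∧
      (T.attachAt a i).minLeaf = T.minLeaf ∧
      (T.attachAt a i).deleteLeaf i = some (a, T) := by
  intro T
  induction T with
  | leaf j =>
      intro _ hlt hcnt
      have hji : j < i := hlt j (by simp [leafMultiset])
      have hja : (j : ℤ) = a := by
        simp only [allLabels, Multiset.count_singleton] at hcnt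
        split_ifs at hcnt with h <;> omega
      have hA : (BTree.leaf j).attachAt a i = .node (.leaf j) (.leaf i) := by
        simp [attachAt, hja]
      rw [hA]
      refine ⟨⟨hji, trivial, trivial⟩, ?_, ?_, ?_⟩
      · simp only [leafMultiset, ← Multiset.singleton_add]
        exact add_comm _ _
      · simp only [minLeaf]; omega
      · have hne : BTree.leaf j ≠ BTree.leaf i := by simp; omega
        simp [deleteLeaf, hne, nodeLabel, hja]
  | node l r ihl ihr =>
      intro hc hlt hcnt
      obtain ⟨hlr, hcl, hcr⟩ := hc
      have hminl : l.minLeaf < i := hlt _ (by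
        simp only [leafMultiset, Multiset.mem_add]; exact Or.inl (minLeaf_mem l))
      have hminr : r.minLeaf < i := hlt _ (by
        simp only [leafMultiset, Multiset.mem_add]; exact Or.inr (minLeaf_mem r))
      have hltl : ∀ j ∈ l.leafMultiset, j < i := fun j hj => hlt j (by
        simp only [leafMultiset, Multiset.mem_add]; exact Or.inl hj)
      have hltr : ∀ j ∈ r.leafMultiset, j < i := fun j hj => hlt j (by
        simp only [leafMultiset, Multiset.mem_add]; exact Or.inr hj)
      rw [allLabels, Multiset.count_cons, Multiset.count_add] at hcnt
      by_cases hroot : (BTree.node l r).nodeLabel = a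
      · have hA : (BTree.node l r).attachAt a i = .node (.node l r) (.leaf i) :=
          attach_at_root hroot
        rw [hA]
        have hmin : (BTree.node l r).minLeaf < i := by
          simp only [minLeaf]; omega
        refine ⟨⟨by simp only [minLeaf]; omega, ⟨hlr, hcl, hcr⟩, trivial⟩, ?_, ?_, ?_⟩
        · simp only [leafMultiset, ← Multiset.singleton_add]
          exact add_comm _ _
        · simp only [minLeaf]; omega
        · have hne : BTree.node l r ≠ BTree.leaf i := by simp
          simp [deleteLeaf, hne, hroot]
      · have hcnt' : (allLabels l).count a + (allLabels r).count a = 1 := by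
          have hne2 : ¬(a = (BTree.node l r).nodeLabel) := fun h => hroot h.symm
          rw [if_neg hne2] at hcnt
          omega
        have hAeq : (BTree.node l r).attachAt a i =
            .node (l.attachAt a i) (r.attachAt a i) := by
          simp [attachAt, hroot]
        rcases Nat.eq_zero_or_pos ((allLabels l).count a) with hzl | hpl
        · -- a occurs in r
          have hcr1 : (allLabels r).count a = 1 := by omega
          have hnl : a ∉ allLabels l := by rwa [← Multiset.count_eq_zero]
          obtain ⟨c1, c2, c3, c4⟩ := ihr hcr hltr hcr1
          have hAl : l.attachAt a i = l := attach_notMem hnl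
          rw [hAeq, hAl]
          have hlneq : l ≠ .leaf i := by
            intro he
            have : i ∈ l.leafMultiset := by rw [he]; simp [leafMultiset]
            exact absurd (hltl i this) (by omega)
          have hrneq : r.attachAt a i ≠ .leaf i := by
            intro he; rw [he] at c4; simp [deleteLeaf] at c4
          have hdl : l.deleteLeaf i = none := delete_notMem (fun hmem =>
            absurd (hltl i hmem) (by omega))
          refine ⟨⟨by rw [c3]; exact hlr, hcl, c1⟩, ?_, ?_, ?_⟩
          · simp only [leafMultiset, c2]
            rw [Multiset.add_cons]
          · simp only [minLeaf, c3]
          · simp only [deleteLeaf, if_neg hlneq, if_neg hrneq]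
            rw [hdl, c4]
        · -- a occurs in l
          have hcl1 : (allLabels l).count a = 1 := by omega
          have hnr : a ∉ allLabels r := by
            rw [← Multiset.count_eq_zero]; omega
          obtain ⟨c1, c2, c3, c4⟩ := ihl hcl hltl hcl1
          have hAr : r.attachAt a i = r := attach_notMem hnr
          rw [hAeq, hAr]
          have hlneq : l.attachAt a i ≠ .leaf i := by
            intro he; rw [he] at c4; simp [deleteLeaf] at c4
          have hrneq : r ≠ .leaf i := by
            intro he
            have : i ∈ r.leafMultiset := by rw [he]; simp [leafMultiset]
            exact absurd (hltr i this) (by omega)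
          refine ⟨⟨by rw [c3]; exact hlr, c1, hcr⟩, ?_, ?_, ?_⟩
          · simp only [leafMultiset, c2]
            rw [Multiset.cons_add]

          · simp only [minLeaf, c3]
          · simp only [deleteLeaf, if_neg hlneq, if_neg hrneq]
            rw [c4]

end OLAProof
namespace OLAProof
open BTree

lemma delete_spec {i : ℕ} :
    ∀ {T : BTree}, T.Canonical → (∀ j ∈ T.leafMultiset, j ≤ i) →
      T.leafMultiset.count i = 1 → (allLabels T).Nodup → T ≠ .leaf i →
      ∃ a T', T.deleteLeaf i = some (a, T') ∧
        T'.attachAt a i = T ∧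
        T'.Canonical ∧
        T.leafMultiset = i ::ₘ T'.leafMultiset ∧
        T'.minLeaf = T.minLeaf ∧
        allLabels T = (i : ℤ) ::ₘ (-(i : ℤ)) ::ₘ allLabels T' ∧
        a ∈ allLabels T' := by
  intro T
  induction T with
  | leaf j =>
      intro _ _ hcnt _ hne
      exfalso
      rcases eq_or_ne i j with h | h
      · exact hne (by rw [h])
      · simp only [leafMultiset, Multiset.count_singleton, if_neg h] at hcnt
        omega
  | node l r ihl ihr =>
      intro hc hle hcnt hnd _
      obtain ⟨hlr, hcl, hcr⟩ := hc
      have hlel : ∀ j ∈ l.leafMultiset, j ≤ i := fun j hj => hle j (by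
        simp only [leafMultiset, Multiset.mem_add]; exact Or.inl hj)
      have hler : ∀ j ∈ r.leafMultiset, j ≤ i := fun j hj => hle j (by
        simp only [leafMultiset, Multiset.mem_add]; exact Or.inr hj)
      rw [leafMultiset, Multiset.count_add] at hcnt
      have hndtail : (allLabels l + allLabels r).Nodup ∧
          (BTree.node l r).nodeLabel ∉ allLabels l + allLabels r := by
        rw [allLabels, Multiset.nodup_cons] at hnd
        exact ⟨hnd.2, hnd.1⟩
      have hndl : (allLabels l).Nodup := (Multiset.nodup_add.mp hndtail.1).1
      have hndr : (allLabels r).Nodup := (Multiset.nodup_add.mp hndtail.1).2.1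
      have hdisj := (Multiset.nodup_add.mp hndtail.1).2.2
      have hdisj' : ∀ {x : ℤ}, x ∈ allLabels l → x ∉ allLabels r :=
        fun hx => Multiset.disjoint_left.mp hdisj hx
      have hL : l ≠ .leaf i := by
        intro he
        have hri : r.minLeaf ≤ i := hler _ (minLeaf_mem r)
        rw [he] at hlr
        simp only [minLeaf] at hlr
        omega
      by_cases hR : r = .leaf i
      · -- r is the leaf i
        subst hR
        have hlri : l.minLeaf < i := by simpa only [minLeaf] using hlr
        refine ⟨l.nodeLabel, l, ?_, attach_at_root rfl, hcl, ?_, ?_, ?_, nodeLabel_mem_allLabels l⟩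
        · simp [deleteLeaf, hL]
        · simp only [leafMultiset, ← Multiset.singleton_add]
          exact add_comm _ _
        · simp only [minLeaf]
          omega
        · have hlab : (BTree.node l (.leaf i)).nodeLabel = -(i : ℤ) := by
            simp only [nodeLabel, minLeaf]
            omega
          rw [allLabels, hlab]
          show -(i : ℤ) ::ₘ (allLabels l + {((i:ℕ) : ℤ)}) = (i : ℤ) ::ₘ (-(i : ℤ)) ::ₘ allLabels l
          simp only [← Multiset.singleton_add]
          abel
      · -- leaf i is deeper
        have hRcnt : r.leafMultiset.count i ≠ 1 ∨ l.leafMultiset.count i ≠ 1 := by omega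
        rcases Nat.eq_zero_or_pos (l.leafMultiset.count i) with hzl | hpl
        · -- leaf i inside r
          have hcr1 : r.leafMultiset.count i = 1 := by omega
          obtain ⟨a, r', hd, hat, hc', hlm, hmin, hall, hmem⟩ := ihr hcr hler hcr1 hndr hR
          have hnil : i ∉ l.leafMultiset := by rwa [← Multiset.count_eq_zero]
          have hdl : l.deleteLeaf i = none := delete_notMem hnil
          have hLne : l ≠ .leaf i := hL
          have hamem : a ∈ allLabels r := by
            rw [hall]; exact Multiset.mem_cons_of_mem (Multiset.mem_cons_of_mem hmem)
          have hanl : a ∉ allLabels l := fun h => hdisj' h hamem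
          have hlabeq : (BTree.node l r').nodeLabel = (BTree.node l r).nodeLabel := by
            simp only [nodeLabel, hmin]
          have hanroot : (BTree.node l r').nodeLabel ≠ a := by
            rw [hlabeq]
            intro h
            exact hndtail.2 (by rw [h]; exact Multiset.mem_add.mpr (Or.inr hamem))
          refine ⟨a, .node l r', ?_, ?_, ⟨by rw [hmin]; exact hlr, hcl, hc'⟩, ?_, ?_, ?_, ?_⟩
          · simp only [deleteLeaf, if_neg hLne, if_neg hR]
            rw [hdl, hd]
          · rw [show (BTree.node l r').attachAt a i =
                .node (l.attachAt a i) (r'.attachAt a i) by simp [attachAt, hanroot]]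
            rw [attach_notMem hanl, hat]
          · simp only [leafMultiset, hlm]
            rw [Multiset.add_cons]
          · simp only [minLeaf, hmin]
          · rw [allLabels, allLabels, hlabeq, hall]
            simp only [← Multiset.singleton_add]
            abel
          · rw [allLabels]
            simp only [Multiset.mem_cons, Multiset.mem_add]
            exact Or.inr (Or.inr hmem)
        · -- leaf i inside l
          have hcl1 : l.leafMultiset.count i = 1 := by omega
          obtain ⟨a, l', hd, hat, hc', hlm, hmin, hall, hmem⟩ := ihl hcl hlel hcl1 hndl hL
          have hnir : i ∉ r.leafMultiset := by
            rw [← Multiset.count_eq_zero]; omega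
          have hRne : r ≠ .leaf i := hR
          have hamem : a ∈ allLabels l := by
            rw [hall]; exact Multiset.mem_cons_of_mem (Multiset.mem_cons_of_mem hmem)
          have hanr : a ∉ allLabels r := hdisj' hamem
          have hlabeq : (BTree.node l' r).nodeLabel = (BTree.node l r).nodeLabel := by
            simp only [nodeLabel, hmin]
          have hanroot : (BTree.node l' r).nodeLabel ≠ a := by
            rw [hlabeq]
            intro h
            exact hndtail.2 (by rw [h]; exact Multiset.mem_add.mpr (Or.inl hamem))
          refine ⟨a, .node l' r, ?_, ?_, ⟨by rw [hmin]; exact hlr, hc', hcr⟩, ?_, ?_, ?_, ?_⟩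
          · simp only [deleteLeaf, if_neg hL, if_neg hR]
            rw [hd]
          · rw [show (BTree.node l' r).attachAt a i =
                .node (l'.attachAt a i) (r.attachAt a i) by simp [attachAt, hanroot]]
            rw [attach_notMem hanr, hat]
          · simp only [leafMultiset, hlm]
            rw [Multiset.cons_add]
          · simp only [minLeaf, hmin]
          · rw [allLabels, allLabels, hlabeq, hall]
            simp only [← Multiset.singleton_add]
            abel
          · rw [allLabels]
            simp only [Multiset.mem_cons, Multiset.mem_add]
            exact Or.inr (Or.inl hmem)

end OLAProof
namespace OLAProof
open BTree

lemma olaDecodeAux_append (L : List ℤ) : ∀ (T : BTree) (i : ℕ) (a : ℤ),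
    olaDecodeAux T i (L ++ [a]) = (olaDecodeAux T i L).attachAt a (i + L.length) := by
  induction L with
  | nil => intro T i a; simp [olaDecodeAux]
  | cons b L ih =>
      intro T i a
      show olaDecodeAux (attachAt b i T) (i + 1) (L ++ [a]) =
        attachAt a (i + (L.length + 1)) (olaDecodeAux (attachAt b i T) (i + 1) L)
      rw [ih, show (i + 1) + L.length = i + (L.length + 1) from by omega]

lemma encode_spec : ∀ m : ℕ, ∀ T : BTree, T.Canonical →
    T.leafMultiset = Multiset.range (m + 1) →
    (olaEncodeAux m T).length = m ∧ ValidCode (olaEncodeAux m T) ∧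
    olaDecodeAux (.leaf 0) 1 (olaEncodeAux m T) = T := by
  intro m
  induction m with
  | zero =>
      intro T _ hl
      have hT : T = .leaf 0 := eq_leaf_of_leafMultiset_singleton (by
        rw [hl]; rfl)
      subst hT
      refine ⟨rfl, ?_, rfl⟩
      intro k
      exact absurd k.isLt (by simp [olaEncodeAux])
  | succ k ih =>
      intro T hc hl
      have hne : T ≠ .leaf (k + 1) := by
        intro he
        have := congrArg Multiset.card hl
        rw [he] at this
        simp [leafMultiset] at this
      obtain ⟨a, T', hdel, hat, hc', hlm, _, _, hmem⟩ := delete_spec hc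
        (fun j hj => by rw [hl, Multiset.mem_range] at hj; omega)
        (by rw [hl]; exact Multiset.count_eq_one_of_mem (Multiset.nodup_range _)
              (Multiset.mem_range.mpr (by omega)))
        (nodup_allLabels hc hl) hne
      have hl' : T'.leafMultiset = Multiset.range (k + 1) := by
        have : (k+1) ::ₘ T'.leafMultiset = (k+1) ::ₘ Multiset.range (k+1) := by
          rw [← hlm, ← Multiset.range_succ, hl]
        exact (Multiset.cons_inj_right _).mp this
      obtain ⟨ih1, ih2, ih3⟩ := ih T' hc' hl'
      have hab : -((k:ℤ)+1) < a ∧ a < (k:ℤ)+1 := by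
        have := (mem_allLabels_iff hc' hl' a).mp hmem
        push_cast at this
        omega
      have henc : olaEncodeAux (k+1) T = olaEncodeAux k T' ++ [a] := by
        rw [olaEncodeAux, hdel]
      refine ⟨by rw [henc]; simp [ih1], ?_, ?_⟩
      · intro idx
        have hlen : (olaEncodeAux (k+1) T).length = k + 1 := by rw [henc]; simp [ih1]
        have hidx : (idx : ℕ) < k + 1 := by have h1 := idx.isLt; omega
        by_cases hik : (idx : ℕ) < k
        · have hg : (olaEncodeAux (k+1) T).get idx =
              (olaEncodeAux k T').get ⟨idx, by omega⟩ := by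
            simp only [List.get_eq_getElem, henc]
            exact List.getElem_append_left (by omega)
          rw [hg]
          have := ih2 ⟨idx, by omega⟩
          simpa using this
        · have hik' : (idx : ℕ) = k := by omega
          have hg : (olaEncodeAux (k+1) T).get idx = a := by
            simp only [List.get_eq_getElem, henc]
            rw [List.getElem_append_right (by omega)]
            simp [ih1, hik']
          rw [hg, hik']
          exact hab
      · rw [henc, olaDecodeAux_append, ih3, ih1]
        rw [show 1 + k = k + 1 by omega]
        exact hat

lemma decode_spec : ∀ v : List ℤ, ValidCode v →
    (olaDecode v).Canonical ∧
    (olaDecode v).leafMultiset = Multiset.range (v.length + 1) ∧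
    (olaDecode v).numLeaves = v.length + 1 ∧
    olaEncode (olaDecode v) = v := by
  intro v
  induction v using List.reverseRecOn with
  | nil =>
      intro _
      refine ⟨trivial, by decide, rfl, rfl⟩
  | append_singleton L a ihA =>
      intro hv
      have hvL : ValidCode L := by
        intro kk
        have hkk : (kk : ℕ) < (L ++ [a]).length := by
          have := kk.isLt
          simp only [List.length_append, List.length_cons, List.length_nil]
          omega
        have := hv ⟨kk, hkk⟩
        have hg : (L ++ [a]).get ⟨kk, hkk⟩ = L.get kk := by
          simp only [List.get_eq_getElem]
          exact List.getElem_append_left kk.isLt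
        rw [hg] at this
        simpa using this
      obtain ⟨hc, hlm, hnl, henc⟩ := ihA hvL
      have hlast : (L ++ [a]).get ⟨L.length, by simp⟩ = a := by
        simp
      have hab0 := hv ⟨L.length, by simp⟩
      rw [hlast] at hab0
      have hab : -((L.length : ℤ) + 1) < a ∧ a < (L.length : ℤ) + 1 := by
        simpa using hab0
      have hcnt1 : (allLabels (olaDecode L)).count a = 1 := by
        rw [count_allLabels hc hlm]
        rw [if_pos (by push_cast; omega)]
      have hlt : ∀ j ∈ (olaDecode L).leafMultiset, j < L.length + 1 := by
        intro j hj
        rw [hlm, Multiset.mem_range] at hj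
        exact hj
      obtain ⟨A1, A2, A3, A4⟩ := attach_spec (i := L.length + 1) hc hlt hcnt1
      have hdv : olaDecode (L ++ [a]) = (olaDecode L).attachAt a (L.length + 1) := by
        rw [olaDecode, olaDecode, olaDecodeAux_append]
        rw [show 1 + L.length = L.length + 1 by omega]
      have hlm2 : (olaDecode (L ++ [a])).leafMultiset =
          Multiset.range (L.length + 2) := by
        rw [hdv, A2, hlm, ← Multiset.range_succ]
      have hnl2 : (olaDecode (L ++ [a])).numLeaves = L.length + 2 := by
        rw [← card_leafMultiset, hlm2, Multiset.card_range]
      refine ⟨by rw [hdv]; exact A1, by simpa using hlm2, by simpa using hnl2, ?_⟩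
      rw [olaEncode, hnl2]
      have : L.length + 2 - 1 = (L.length + 1) := rfl
      rw [this, olaEncodeAux]
      rw [hdv, A4]
      have henc' : olaEncodeAux L.length (olaDecode L) = L := by
        have h5 := henc
        rw [olaEncode, hnl] at h5
        simpa using h5
      show olaEncodeAux L.length (olaDecode L) ++ [a] = L ++ [a]
      rw [henc']

end OLAProof
/-- For every `n ≥ 2`, the OLA encoding `Φ` and decoding `Ψ` are
mutually inverse bijections between the set `RBT_n` of leaf-ordered rooted binary
trees on `n` leaves and the set `C_{n-1}` of valid integer vectors:
`Φ` maps `RBT_n` into `C_{n-1}`, `Ψ` maps `C_{n-1}` into `RBT_n`,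
`Ψ(Φ(T)) = T` for every `T ∈ RBT_n`, and `Φ(Ψ(v)) = v` for every `v ∈ C_{n-1}`. -/
theorem ola_encode_decode_mutually_inverse (n : ℕ) (hn : 2 ≤ n) :
    (∀ T : BTree, BTree.IsRBT n T →
      (BTree.olaEncode T).length = n - 1 ∧ ValidCode (BTree.olaEncode T) ∧
      BTree.olaDecode (BTree.olaEncode T) = T) ∧
    (∀ v : List ℤ, v.length = n - 1 → ValidCode v →
      BTree.IsRBT n (BTree.olaDecode v) ∧
      BTree.olaEncode (BTree.olaDecode v) = v) := by
  obtain ⟨m, rfl⟩ : ∃ m, n = m + 1 := ⟨n - 1, by omega⟩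
  constructor
  · rintro T ⟨hc, hl⟩
    obtain ⟨e1, e2, e3⟩ := OLAProof.encode_spec m T hc hl
    have hnum : T.numLeaves = m + 1 := by
      rw [← OLAProof.card_leafMultiset, hl, Multiset.card_range]
    have hE : T.olaEncode = BTree.olaEncodeAux m T := by
      rw [BTree.olaEncode, hnum, Nat.add_sub_cancel]
    refine ⟨by rw [hE, e1]; omega, by rw [hE]; exact e2, by rw [hE]; exact e3⟩
  · intro v hlen hvc
    obtain ⟨c, lm, _, enc⟩ := OLAProof.decode_spec v hvc
    have hv1 : v.length + 1 = m + 1 := by omega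
    exact ⟨⟨c, by rw [lm, hv1]⟩, enc⟩
end

section
/- For every integer n ≥ 2, the OLA encoding Φ : RBT_n → C_{n−1} is a bijection from the set of leaf-ordered rooted binary trees on n leaves to the set of valid integer vectors C_{n−1}. -/
lemma validCode_nil : ValidCode [] := fun i => i.elim0

lemma validCode_append_singleton {v : List ℤ} {a : ℤ} :
    ValidCode (v ++ [a]) ↔ ValidCode v ∧ -((v.length : ℤ) + 1) < a ∧ a < v.length + 1 := by
  simp only [ValidCode, Fin.forall_iff, List.get_eq_getElem, List.length_append,
    List.length_singleton]
  constructor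
  · intro h
    refine ⟨fun i hi => ?_, by simpa using h v.length (by omega)⟩
    simpa [List.getElem_append_left hi] using h i (by omega)
  · rintro ⟨hv, ha⟩ i hi
    rcases Nat.lt_succ_iff_lt_or_eq.1 hi with hi | rfl
    · simpa [List.getElem_append_left hi] using hv i hi
    · simpa using ha

namespace BTree

lemma card_leafMultiset (T : BTree) : Multiset.card (leafMultiset T) = numLeaves T := by
  induction T with
  | leaf j => rfl
  | node l r ihl ihr => simp [leafMultiset, numLeaves, ihl, ihr]

lemma minLeaf_mem (T : BTree) : minLeaf T ∈ leafMultiset T := by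
  induction T with
  | leaf j => simp [leafMultiset, minLeaf]
  | node l r ihl ihr =>
    rcases min_choice (minLeaf l) (minLeaf r) with h | h <;>
      simp [leafMultiset, minLeaf, h, ihl, ihr]

lemma minLeaf_le {T : BTree} {j : ℕ} (h : j ∈ leafMultiset T) : minLeaf T ≤ j := by
  induction T with
  | leaf k => simp_all [leafMultiset, minLeaf]
  | node l r ihl ihr =>
    rcases Multiset.mem_add.1 h with h | h
    · exact (min_le_left _ _).trans (ihl h)
    · exact (min_le_right _ _).trans (ihr h)

lemma eq_leaf_of_leafMultiset_eq_singleton {T : BTree} {j : ℕ}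
    (h : leafMultiset T = {j}) : T = leaf j := by
  cases T with
  | leaf k => simpa [leafMultiset] using h
  | node l r =>
    have hcard := congrArg Multiset.card h
    have hl := Multiset.card_pos_iff_exists_mem.2 ⟨_, minLeaf_mem l⟩
    have hr := Multiset.card_pos_iff_exists_mem.2 ⟨_, minLeaf_mem r⟩
    simp only [leafMultiset, Multiset.card_add, Multiset.card_singleton] at hcard
    omega

lemma nodeLabel_node_of_lt {l r : BTree} (h : minLeaf l < minLeaf r) :
    nodeLabel (node l r) = -(minLeaf r : ℤ) := by
  rw [nodeLabel]; omega

lemma minLeaf_node_of_lt {l r : BTree} (h : minLeaf l < minLeaf r) :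
    minLeaf (node l r) = minLeaf l :=
  min_eq_left h.le

/-- For a canonical tree with distinct leaves these are exactly the labels of its nodes:
every leaf `j ≠ minLeaf T` is the clade splitter of exactly one internal node, labelled `-j`. -/
def IsLabel (T : BTree) (a : ℤ) : Prop :=
  a.natAbs ∈ leafMultiset T ∧ (a < 0 → minLeaf T < a.natAbs)

lemma isLabel_nodeLabel {T : BTree} (hT : Canonical T) : IsLabel T (nodeLabel T) := by
  cases T with
  | leaf j => simp [IsLabel, nodeLabel, leafMultiset]
  | node l r =>
    rw [nodeLabel_node_of_lt hT.1]
    refine ⟨by simp [leafMultiset, minLeaf_mem r], fun _ => ?_⟩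
    simpa [minLeaf_node_of_lt hT.1] using hT.1

lemma isLabel_leaf {j : ℕ} {a : ℤ} (h : IsLabel (leaf j) a) : a = j := by
  obtain ⟨hmem, hneg⟩ := h
  simp only [leafMultiset, Multiset.mem_singleton, minLeaf] at hmem hneg
  omega

lemma IsLabel.node_left {l r : BTree} {a : ℤ} (hlr : minLeaf l < minLeaf r) (h : IsLabel l a) :
    IsLabel (node l r) a :=
  ⟨Multiset.mem_add.2 (Or.inl h.1), by rw [minLeaf_node_of_lt hlr]; exact h.2⟩

lemma IsLabel.node_right {l r : BTree} {a : ℤ} (hlr : minLeaf l < minLeaf r) (h : IsLabel r a) :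
    IsLabel (node l r) a :=
  ⟨Multiset.mem_add.2 (Or.inr h.1), fun ha => by
    rw [minLeaf_node_of_lt hlr]; exact hlr.trans (h.2 ha)⟩

lemma IsLabel.of_node {l r : BTree} {a : ℤ} (hlr : minLeaf l < minLeaf r)
    (h : IsLabel (node l r) a) (hne : nodeLabel (node l r) ≠ a) : IsLabel l a ∨ IsLabel r a := by
  obtain ⟨hmem, hneg⟩ := h
  rw [minLeaf_node_of_lt hlr] at hneg
  rw [nodeLabel_node_of_lt hlr] at hne
  rcases Multiset.mem_add.1 hmem with hl | hr
  · exact Or.inl ⟨hl, hneg⟩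
  · exact Or.inr ⟨hr, fun ha => lt_of_le_of_ne (minLeaf_le hr) (by omega)⟩

lemma nodeLabel_node_ne {l r : BTree} {a : ℤ} (hlr : minLeaf l < minLeaf r)
    (hd : Disjoint (leafMultiset l) (leafMultiset r)) (ha : IsLabel l a ∨ IsLabel r a) :
    nodeLabel (node l r) ≠ a := by
  rw [nodeLabel_node_of_lt hlr]
  rintro rfl
  rcases ha with ⟨hmem, -⟩ | ⟨-, hneg⟩
  · exact Multiset.disjoint_left.1 hd (by simpa using hmem) (minLeaf_mem r)
  · simp at hneg
    omega

lemma attachAt_eq_self {a : ℤ} {i : ℕ} {T : BTree} (h : a.natAbs ∉ leafMultiset T) :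
    attachAt a i T = T := by
  induction T with
  | leaf j =>
    have : (j : ℤ) ≠ a := by rintro rfl; simp [leafMultiset] at h
    simp [attachAt, this]
  | node l r ihl ihr =>
    simp only [leafMultiset, Multiset.mem_add, not_or] at h
    have hne : nodeLabel (node l r) ≠ a := by
      rintro rfl
      have habs : (nodeLabel (node l r)).natAbs = max (minLeaf l) (minLeaf r) := by
        rw [nodeLabel]; omega
      rcases max_choice (minLeaf l) (minLeaf r) with hm | hm <;>
        simp [habs, hm, minLeaf_mem] at h
    simp only [attachAt, if_neg hne, ihl h.1, ihr h.2]

lemma attachAt_nodeLabel (T : BTree) (i : ℕ) : attachAt (nodeLabel T) i T = node T (leaf i) := by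
  cases T <;> simp [attachAt, nodeLabel]

lemma attachAt_node_left {l r : BTree} {a : ℤ} {i : ℕ} (hlr : minLeaf l < minLeaf r)
    (hd : Disjoint (leafMultiset l) (leafMultiset r)) (ha : IsLabel l a) :
    attachAt a i (node l r) = node (attachAt a i l) r := by
  rw [attachAt, if_neg (nodeLabel_node_ne hlr hd (Or.inl ha)),
    attachAt_eq_self (Multiset.disjoint_left.1 hd ha.1)]

lemma attachAt_node_right {l r : BTree} {a : ℤ} {i : ℕ} (hlr : minLeaf l < minLeaf r)
    (hd : Disjoint (leafMultiset l) (leafMultiset r)) (ha : IsLabel r a) :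
    attachAt a i (node l r) = node l (attachAt a i r) := by
  rw [attachAt, if_neg (nodeLabel_node_ne hlr hd (Or.inr ha)),
    attachAt_eq_self (Multiset.disjoint_right.1 hd ha.1)]

lemma deleteLeaf_node_leaf (l : BTree) (i : ℕ) :
    deleteLeaf i (node l (leaf i)) = some (nodeLabel l, l) := by
  by_cases hl : l = leaf i
  · subst hl; simp [deleteLeaf, nodeLabel]
  · simp [deleteLeaf, hl]

lemma deleteLeaf_node_left {l r l' : BTree} {i : ℕ} {a : ℤ} (hr : r ≠ leaf i)
    (h : deleteLeaf i l = some (a, l')) : deleteLeaf i (node l r) = some (a, node l' r) := by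
  have hl : l ≠ leaf i := by rintro rfl; simp [deleteLeaf] at h
  simp [deleteLeaf, hl, hr, h]

lemma deleteLeaf_eq_none {i : ℕ} {T : BTree} (h : i ∉ leafMultiset T) :
    deleteLeaf i T = none := by
  induction T with
  | leaf j => rfl
  | node l r ihl ihr =>
    simp only [leafMultiset, Multiset.mem_add, not_or] at h
    have hl : l ≠ leaf i := by rintro rfl; simp [leafMultiset] at h
    have hr : r ≠ leaf i := by rintro rfl; simp [leafMultiset] at h
    simp [deleteLeaf, hl, hr, ihl h.1, ihr h.2]

lemma deleteLeaf_node_right {l r r' : BTree} {i : ℕ} {a : ℤ} (hl : i ∉ leafMultiset l)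
    (h : deleteLeaf i r = some (a, r')) : deleteLeaf i (node l r) = some (a, node l r') := by
  have hl' : l ≠ leaf i := by rintro rfl; simp [leafMultiset] at hl
  have hr : r ≠ leaf i := by rintro rfl; simp [deleteLeaf] at h
  simp [deleteLeaf, hl', hr, h, deleteLeaf_eq_none hl]

lemma nodup_leafMultiset_node {l r : BTree} (h : (leafMultiset (node l r)).Nodup) :
    (leafMultiset l).Nodup ∧ (leafMultiset r).Nodup ∧ Disjoint (leafMultiset l) (leafMultiset r) :=
  Multiset.nodup_add.1 h

theorem attachAt_spec {m : ℕ} {a : ℤ} : ∀ {T : BTree}, Canonical T → (leafMultiset T).Nodup →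
    (∀ j ∈ leafMultiset T, j < m) → IsLabel T a →
    Canonical (attachAt a m T) ∧ leafMultiset (attachAt a m T) = m ::ₘ leafMultiset T ∧
      minLeaf (attachAt a m T) = minLeaf T ∧ deleteLeaf m (attachAt a m T) = some (a, T)
  | T, hc, hnd, hlt, ha => by
    have hmin : minLeaf T < m := hlt _ (minLeaf_mem T)
    by_cases htop : nodeLabel T = a
    · subst htop
      rw [attachAt_nodeLabel]
      refine ⟨⟨hmin, hc, trivial⟩, ?_, min_eq_left hmin.le, deleteLeaf_node_leaf T m⟩
      rw [leafMultiset, leafMultiset, add_comm, Multiset.singleton_add]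
    cases T with
    | leaf j => exact absurd (isLabel_leaf ha).symm htop
    | node l r =>
      obtain ⟨hlr, hcl, hcr⟩ := hc
      obtain ⟨hndl, hndr, hd⟩ := nodup_leafMultiset_node hnd
      have hltl : ∀ j ∈ leafMultiset l, j < m := fun j hj => hlt j (Multiset.mem_add.2 (Or.inl hj))
      have hltr : ∀ j ∈ leafMultiset r, j < m := fun j hj => hlt j (Multiset.mem_add.2 (Or.inr hj))
      have hr : r ≠ leaf m := by rintro rfl; simpa [leafMultiset] using hltr m
      rcases ha.of_node hlr htop with ha | ha
      · obtain ⟨c, hleaves, hmin', hdel⟩ := attachAt_spec hcl hndl hltl ha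
        rw [attachAt_node_left hlr hd ha]
        refine ⟨⟨hmin' ▸ hlr, c, hcr⟩, ?_, ?_, deleteLeaf_node_left hr hdel⟩
        · simp [leafMultiset, hleaves]
        · simp [minLeaf, hmin']
      · obtain ⟨c, hleaves, hmin', hdel⟩ := attachAt_spec hcr hndr hltr ha
        rw [attachAt_node_right hlr hd ha]
        refine ⟨⟨hmin' ▸ hlr, hcl, c⟩, ?_, ?_, deleteLeaf_node_right ?_ hdel⟩
        · simp [leafMultiset, hleaves]
        · simp [minLeaf, hmin']
        · exact fun h => lt_irrefl m (hltl m h)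

theorem exists_attachAt_eq {m : ℕ} : ∀ {T : BTree}, Canonical T → (leafMultiset T).Nodup →
    (∀ j ∈ leafMultiset T, j ≤ m) → m ∈ leafMultiset T → T ≠ leaf m →
    ∃ a T', Canonical T' ∧ leafMultiset T' = (leafMultiset T).erase m ∧
      minLeaf T' = minLeaf T ∧ IsLabel T' a ∧ attachAt a m T' = T
  | leaf j, _, _, _, hm, hne => by simp_all [leafMultiset]
  | node l r, ⟨hlr, hcl, hcr⟩, hnd, hle, hm, _ => by
    obtain ⟨hndl, hndr, hd⟩ := nodup_leafMultiset_node hnd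
    have hlel : ∀ j ∈ leafMultiset l, j ≤ m := fun j hj => hle j (Multiset.mem_add.2 (Or.inl hj))
    have hler : ∀ j ∈ leafMultiset r, j ≤ m := fun j hj => hle j (Multiset.mem_add.2 (Or.inr hj))
    by_cases hr : r = leaf m
    · subst hr
      refine ⟨nodeLabel l, l, hcl, ?_, (min_eq_left hlr.le).symm, isLabel_nodeLabel hcl,
        attachAt_nodeLabel l m⟩
      rw [leafMultiset, add_comm, leafMultiset, Multiset.singleton_add, Multiset.erase_cons_head]
    by_cases hmr : m ∈ leafMultiset r
    · obtain ⟨a, r', hcr', hleaves, hmin', ha, rfl⟩ := exists_attachAt_eq hcr hndr hler hmr hr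
      have hlr' : minLeaf l < minLeaf r' := hmin' ▸ hlr
      have hd' : Disjoint (leafMultiset l) (leafMultiset r') :=
        hd.mono_right (hleaves ▸ Multiset.erase_le m _)
      refine ⟨a, node l r', ⟨hlr', hcl, hcr'⟩, ?_, by simp [minLeaf, hmin'],
        ha.node_right hlr', attachAt_node_right hlr' hd' ha⟩
      simp [leafMultiset, hleaves, Multiset.erase_add_right_pos _ hmr]
    · have hml : m ∈ leafMultiset l := (Multiset.mem_add.1 hm).resolve_right hmr
      have hl : l ≠ leaf m := by
        rintro rfl; exact absurd (hlr.trans_le (hler _ (minLeaf_mem r))) (lt_irrefl m)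
      obtain ⟨a, l', hcl', hleaves, hmin', ha, rfl⟩ := exists_attachAt_eq hcl hndl hlel hml hl
      have hlr' : minLeaf l' < minLeaf r := hmin' ▸ hlr
      have hd' : Disjoint (leafMultiset l') (leafMultiset r) :=
        hd.mono_left (hleaves ▸ Multiset.erase_le m _)
      refine ⟨a, node l' r, ⟨hlr', hcl', hcr⟩, ?_, by simp [minLeaf, hmin'],
        ha.node_left hlr', attachAt_node_left hlr' hd' ha⟩
      simp [leafMultiset, hleaves, Multiset.erase_add_left_pos _ hml]

lemma minLeaf_eq_zero_of_leafMultiset_eq_range {T : BTree} {m : ℕ}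
    (h : leafMultiset T = Multiset.range m) : minLeaf T = 0 := by
  have hpos : 0 < m := by
    have := minLeaf_mem T
    rw [h, Multiset.mem_range] at this
    omega
  exact Nat.le_zero.1 (minLeaf_le (by rwa [h, Multiset.mem_range]))

lemma isLabel_iff_of_leafMultiset_eq_range {T : BTree} {m : ℕ} {a : ℤ}
    (h : leafMultiset T = Multiset.range m) : IsLabel T a ↔ -(m : ℤ) < a ∧ a < m := by
  simp only [IsLabel, h, Multiset.mem_range, minLeaf_eq_zero_of_leafMultiset_eq_range h]
  omega

lemma IsRBT.nodup {n : ℕ} {T : BTree} (hT : IsRBT n T) : (leafMultiset T).Nodup :=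
  hT.2 ▸ Multiset.nodup_range n

lemma IsRBT.eq_leaf_zero {T : BTree} (hT : IsRBT 1 T) : T = leaf 0 :=
  eq_leaf_of_leafMultiset_eq_singleton hT.2

theorem IsRBT.attachAt_spec {m : ℕ} {T : BTree} {a : ℤ} (hT : IsRBT m T)
    (ha : -(m : ℤ) < a ∧ a < m) :
    IsRBT (m + 1) (attachAt a m T) ∧ deleteLeaf m (attachAt a m T) = some (a, T) := by
  obtain ⟨hc, hleaves, -, hdel⟩ := BTree.attachAt_spec hT.1 hT.nodup
    (fun j hj => by rwa [hT.2, Multiset.mem_range] at hj)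
    ((isLabel_iff_of_leafMultiset_eq_range hT.2).2 ha)
  exact ⟨⟨hc, by rw [hleaves, hT.2, Multiset.range_succ]⟩, hdel⟩

theorem IsRBT.exists_attachAt_eq {m : ℕ} {T : BTree} (hT : IsRBT (m + 1) T) (hm : 0 < m) :
    ∃ a T', IsRBT m T' ∧ (-(m : ℤ) < a ∧ a < m) ∧ attachAt a m T' = T := by
  have hne : T ≠ leaf m := by
    rintro rfl
    simpa [leafMultiset, hm.ne'] using congrArg Multiset.card hT.2
  obtain ⟨a, T', hc, hleaves, -, ha, rfl⟩ := BTree.exists_attachAt_eq hT.1 hT.nodup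
    (fun j hj => by rw [hT.2, Multiset.mem_range] at hj; omega) (by simp [hT.2]) hne
  have hleaves' : leafMultiset T' = Multiset.range m := by
    rw [hleaves, hT.2, Multiset.range_succ, Multiset.erase_cons_head]
  exact ⟨a, T', ⟨hc, hleaves'⟩, (isLabel_iff_of_leafMultiset_eq_range hleaves').1 ha, rfl⟩

lemma olaEncodeAux_succ_of_deleteLeaf {k : ℕ} {T T' : BTree} {a : ℤ}
    (h : deleteLeaf (k + 1) T = some (a, T')) :
    olaEncodeAux (k + 1) T = olaEncodeAux k T' ++ [a] := by
  simp only [olaEncodeAux, h]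

lemma olaDecodeAux_append_singleton (T : BTree) (i : ℕ) (v : List ℤ) (a : ℤ) :
    olaDecodeAux T i (v ++ [a]) = attachAt a (i + v.length) (olaDecodeAux T i v) := by
  induction v generalizing T i with
  | nil => rfl
  | cons b v ih =>
    simp only [List.cons_append, olaDecodeAux, ih, List.length_cons]
    rw [Nat.add_right_comm, Nat.add_assoc]

lemma olaDecode_append_singleton (v : List ℤ) (a : ℤ) :
    olaDecode (v ++ [a]) = attachAt a (v.length + 1) (olaDecode v) := by
  rw [olaDecode, olaDecodeAux_append_singleton, Nat.add_comm]; rfl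

lemma IsRBT.olaEncode_eq {m : ℕ} {T : BTree} (hT : IsRBT (m + 1) T) :
    olaEncode T = olaEncodeAux m T := by
  rw [olaEncode, ← card_leafMultiset, hT.2, Multiset.card_range, Nat.add_sub_cancel]

theorem IsRBT.olaEncodeAux_spec {m : ℕ} {T : BTree} (hT : IsRBT (m + 1) T) :
    (olaEncodeAux m T).length = m ∧ ValidCode (olaEncodeAux m T) ∧
      olaDecode (olaEncodeAux m T) = T := by
  induction m generalizing T with
  | zero => exact ⟨rfl, validCode_nil, hT.eq_leaf_zero.symm⟩
  | succ k ih =>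
    obtain ⟨a, T', hT', ha, rfl⟩ := hT.exists_attachAt_eq k.succ_pos
    obtain ⟨hlen, hvalid, hdec⟩ := ih hT'
    rw [olaEncodeAux_succ_of_deleteLeaf (hT'.attachAt_spec ha).2]
    refine ⟨by simp [hlen], validCode_append_singleton.2 ⟨hvalid, ?_⟩, ?_⟩
    · push_cast [hlen] at ha ⊢; exact ha
    · rw [olaDecode_append_singleton, hdec, hlen]

theorem olaDecode_spec {v : List ℤ} (hv : ValidCode v) :
    IsRBT (v.length + 1) (olaDecode v) ∧ olaEncodeAux v.length (olaDecode v) = v := by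
  induction v using List.reverseRecOn with
  | nil => exact ⟨⟨trivial, rfl⟩, rfl⟩
  | append_singleton w a ih =>
    obtain ⟨hw, ha⟩ := validCode_append_singleton.1 hv
    obtain ⟨hT, henc⟩ := ih hw
    have ha' : -((w.length + 1 : ℕ) : ℤ) < a ∧ a < (w.length + 1 : ℕ) := by push_cast; exact ha
    obtain ⟨hT', hdel⟩ := hT.attachAt_spec ha'
    rw [olaDecode_append_singleton, List.length_append, List.length_singleton]
    exact ⟨hT', by rw [olaEncodeAux_succ_of_deleteLeaf hdel, henc]⟩

end BTree

/-- For every `n ≥ 2`, the OLA encoding `Φ` is a bijection from the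
set `RBT_n` of leaf-ordered rooted binary trees on `n` leaves onto the set
`C_{n-1} = {(a_1, ..., a_{n-1}) ∈ ℤ^{n-1} : -i < a_i < i}` of valid integer vectors. -/
theorem ola_encode_bijective (n : ℕ) (hn : 2 ≤ n) :
    Set.BijOn BTree.olaEncode {T : BTree | BTree.IsRBT n T}
      {v : List ℤ | v.length = n - 1 ∧ ValidCode v} := by
  obtain ⟨m, rfl⟩ : ∃ m, n = m + 1 := ⟨n - 1, by omega⟩
  rw [Nat.add_sub_cancel]
  refine Set.InvOn.bijOn (f' := BTree.olaDecode) ⟨fun T (hT : BTree.IsRBT _ T) => ?_, ?_⟩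
    (fun T (hT : BTree.IsRBT _ T) => ?_) ?_
  · rw [hT.olaEncode_eq, hT.olaEncodeAux_spec.2.2]
  · rintro v ⟨rfl, hv⟩
    obtain ⟨hT, henc⟩ := BTree.olaDecode_spec hv
    rw [hT.olaEncode_eq, henc]
  · rw [hT.olaEncode_eq]
    exact ⟨hT.olaEncodeAux_spec.1, hT.olaEncodeAux_spec.2.1⟩
  · rintro v ⟨rfl, hv⟩
    exact (BTree.olaDecode_spec hv).1
end

section
/- For any leaf-ordered rooted binary tree T on n leaves labeled {0, 1, ..., n−1} (n ≥ 2), the canonical internal node labeling assigns to the n−1 internal nodes of T labels forming exactly the set {−1, −2, ..., −(n−1)}, i.e., the labeling is a bijection between the internal nodes of T and {−1, −2, ..., −n+1}. -/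
lemma BTree.minLeaf_mem_s2 (T : BTree) : T.minLeaf ∈ T.leafMultiset := by
  induction T with
  | leaf j => simp [BTree.minLeaf, BTree.leafMultiset]
  | node l r ihl ihr =>
    simp only [BTree.minLeaf, BTree.leafMultiset, Multiset.mem_add]
    rcases min_cases l.minLeaf r.minLeaf with ⟨h, _⟩ | ⟨h, _⟩ <;> rw [h] <;> tauto

lemma BTree.minLeaf_le_s2 (T : BTree) {j : ℕ} (h : j ∈ T.leafMultiset) : T.minLeaf ≤ j := by
  induction T with
  | leaf k => simp [BTree.leafMultiset] at h; simp [BTree.minLeaf, h]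
  | node l r ihl ihr =>
    simp only [BTree.leafMultiset, Multiset.mem_add] at h
    rcases h with h | h
    · exact le_trans (min_le_left _ _) (ihl h)
    · exact le_trans (min_le_right _ _) (ihr h)

lemma internalLabels_eq_erase (T : BTree) (h : BTree.Canonical T) :
    internalLabels T = ((T.leafMultiset).erase T.minLeaf).map (fun j : ℕ => -(j : ℤ)) := by
  induction T with
  | leaf j => simp [internalLabels, BTree.leafMultiset, BTree.minLeaf]
  | node l r ihl ihr =>
    obtain ⟨hlt, hl, hr⟩ := h
    have hmin : (BTree.node l r).minLeaf = l.minLeaf := by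
      simp [BTree.minLeaf, min_eq_left hlt.le]
    have hlab : BTree.nodeLabel (BTree.node l r) = -(r.minLeaf : ℤ) := by
      simp only [BTree.nodeLabel]; omega
    rw [internalLabels, ihl hl, ihr hr, hmin, hlab]
    simp only [BTree.leafMultiset]
    rw [Multiset.erase_add_left_pos _ (BTree.minLeaf_mem_s2 l)]
    conv_rhs => rw [← Multiset.cons_erase (BTree.minLeaf_mem_s2 r)]
    rw [Multiset.add_cons, Multiset.map_cons, Multiset.map_add]

lemma range_succ_eq (m : ℕ) :
    Multiset.range (m + 1) = 0 ::ₘ (Multiset.range m).map (· + 1) := by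
  induction m with
  | zero => rfl
  | succ k ih =>
    conv_lhs => rw [Multiset.range_succ, ih]
    conv_rhs => rw [Multiset.range_succ, Multiset.map_cons]
    rw [Multiset.cons_swap]

/-- For any leaf-ordered rooted binary tree `T` on `n` leaves
(`n ≥ 2`), the canonical internal node labeling is a bijection between the `n - 1`
internal nodes of `T` and the labels `{-1, -2, ..., -(n-1)}`: the multiset of
canonical labels of internal nodes is exactly `{-1, -2, ..., -(n-1)}`. -/
theorem canonical_labels_bijective (n : ℕ) (hn : 2 ≤ n) (T : BTree)
    (hT : BTree.IsRBT n T) :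
    internalLabels T = (Multiset.range (n - 1)).map (fun k => -((k : ℤ) + 1)) := by
  obtain ⟨hc, hleaf⟩ := hT
  obtain ⟨m, rfl⟩ : ∃ m, n = m + 1 := ⟨n - 1, by omega⟩
  have hmem0 : (0 : ℕ) ∈ T.leafMultiset := by
    rw [hleaf]; simp [Multiset.mem_range]; omega
  have hmin0 : T.minLeaf = 0 := Nat.le_zero.mp (BTree.minLeaf_le_s2 T hmem0)
  rw [internalLabels_eq_erase T hc, hleaf, hmin0, range_succ_eq,
    Multiset.erase_cons_head, Nat.add_sub_cancel]
  simp [Multiset.map_map]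
end

section
/- For every n ≥ 3, there exist leaf-ordered rooted binary trees T and T′ on n leaves that differ by a single NNI move and have maximal OLA distance d_OLA(T, T′) = n − 2; specifically, the trees with OLA encodings (0, 0, −1, −1, ..., −1) and (0, −1, −2, −2, ..., −2) are NNI neighbors whose encodings differ in all n − 2 entries after the first. -/
namespace OLAAux

open BTree

/-- Tree with OLA code (0,0): leaf 2 attached at 0, after leaf 1 at 0. -/
def TD : BTree := .node (.node (.leaf 0) (.leaf 2)) (.leaf 1)

/-- Tree with OLA code (0,-1). -/
def TQ : BTree := .node (.node (.leaf 0) (.leaf 1)) (.leaf 2)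

/-- Wrap `X` with leaves `m, m+1, ..., m+k-1`, with `m` outermost. -/
def wrapFrom (X : BTree) : ℕ → ℕ → BTree
  | _, 0 => X
  | m, k+1 => .node (wrapFrom X (m+1) k) (.leaf m)

def ctxFrom : ℕ → ℕ → Ctx
  | _, 0 => .hole
  | m, k+1 => .left (ctxFrom (m+1) k) (.leaf m)

def rangeFrom : ℕ → ℕ → Multiset ℕ
  | _, 0 => 0
  | m, k+1 => m ::ₘ rangeFrom (m+1) k

lemma fill_ctxFrom (X : BTree) : ∀ k m, (ctxFrom m k).fill X = wrapFrom X m k := by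
  intro k
  induction k with
  | zero => intro m; rfl
  | succ k ih => intro m; simp [ctxFrom, wrapFrom, Ctx.fill, ih]

lemma minLeaf_wrapFrom (X : BTree) (h : X.minLeaf = 0) :
    ∀ k m, (wrapFrom X m k).minLeaf = 0 := by
  intro k
  induction k with
  | zero => intro m; exact h
  | succ k ih => intro m; simp [wrapFrom, minLeaf, ih]

lemma canonical_wrapFrom (X : BTree) (hc : X.Canonical) (h0 : X.minLeaf = 0) :
    ∀ k m, 1 ≤ m → (wrapFrom X m k).Canonical := by
  intro k
  induction k with
  | zero => intro m _; exact hc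
  | succ k ih =>
    intro m hm
    refine ⟨?_, ih (m+1) (by omega), trivial⟩
    simp [BTree.minLeaf, minLeaf_wrapFrom X h0]
    omega

lemma leafMultiset_wrapFrom (X : BTree) :
    ∀ k m, (wrapFrom X m k).leafMultiset = X.leafMultiset + rangeFrom m k := by
  intro k
  induction k with
  | zero => intro m; simp [wrapFrom, rangeFrom]
  | succ k ih =>
    intro m
    show (wrapFrom X (m+1) k).leafMultiset + {m} = X.leafMultiset + (m ::ₘ rangeFrom (m+1) k)
    rw [ih, add_assoc, ← Multiset.singleton_add, add_comm (rangeFrom (m+1) k), Multiset.singleton_add]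

lemma range_add_rangeFrom : ∀ k m, Multiset.range (m + k) = Multiset.range m + rangeFrom m k := by
  intro k
  induction k with
  | zero => intro m; simp [rangeFrom]
  | succ k ih =>
    intro m
    have : m + (k+1) = (m+1) + k := by omega
    rw [this, ih (m+1)]
    show Multiset.range (m+1) + rangeFrom (m+1) k = Multiset.range m + (m ::ₘ rangeFrom (m+1) k)
    rw [Multiset.range_succ, Multiset.cons_add, Multiset.add_cons]

lemma numLeaves_wrapFrom (X : BTree) :
    ∀ k m, (wrapFrom X m k).numLeaves = X.numLeaves + k := by
  intro k
  induction k with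
  | zero => intro m; rfl
  | succ k ih => intro m; show (wrapFrom X (m+1) k).numLeaves + 1 = _; rw [ih]; omega

lemma treeEquiv_refl : ∀ T : BTree, TreeEquiv T T := by
  intro T
  induction T with
  | leaf j => simp [TreeEquiv]
  | node l r ihl ihr => exact Or.inl ⟨ihl, ihr⟩

lemma deleteLeaf_wrapFrom (a b : BTree) :
    ∀ k m, deleteLeaf (m + k) (wrapFrom (.node a b) m (k+1)) =
      some (nodeLabel (.node a b), wrapFrom (.node a b) m k) := by
  intro k
  induction k with
  | zero =>
    intro m
    show deleteLeaf m (.node (.node a b) (.leaf m)) = _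
    simp [deleteLeaf, wrapFrom]
  | succ k ih =>
    intro m
    show deleteLeaf (m + (k+1)) (.node (wrapFrom (.node a b) (m+1) (k+1)) (.leaf m)) = _
    have h1 : wrapFrom (.node a b) (m+1) (k+1) ≠ BTree.leaf (m + (k+1)) := by
      simp [wrapFrom]
    have h2 : BTree.leaf m ≠ BTree.leaf (m + (k+1)) := by simp
    have h3 : m + (k+1) = (m+1) + k := by omega
    rw [deleteLeaf, if_neg h1, if_neg h2, h3, ih (m+1)]
    rfl

lemma encodeAux_TD : ∀ k, olaEncodeAux (2 + k) (wrapFrom TD 3 k) =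
    [0, 0] ++ List.replicate k (-1 : ℤ) := by
  intro k
  induction k with
  | zero => rfl
  | succ k ih =>
    have hd : deleteLeaf (3 + k) (wrapFrom TD 3 (k+1)) = some (-1, wrapFrom TD 3 k) :=
      deleteLeaf_wrapFrom _ _ k 3
    have h23 : 2 + (k+1) = (2 + k) + 1 := by omega
    have h32 : 2 + k + 1 = 3 + k := by omega
    rw [h23, olaEncodeAux, h32, hd]
    show olaEncodeAux (2 + k) (wrapFrom TD 3 k) ++ [(-1 : ℤ)] = _
    rw [ih, List.replicate_succ']
    simp

lemma encodeAux_TQ : ∀ k, olaEncodeAux (2 + k) (wrapFrom TQ 3 k) =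
    [0, -1] ++ List.replicate k (-2 : ℤ) := by
  intro k
  induction k with
  | zero => rfl
  | succ k ih =>
    have hd : deleteLeaf (3 + k) (wrapFrom TQ 3 (k+1)) = some (-2, wrapFrom TQ 3 k) :=
      deleteLeaf_wrapFrom _ _ k 3
    have h23 : 2 + (k+1) = (2 + k) + 1 := by omega
    have h32 : 2 + k + 1 = 3 + k := by omega
    rw [h23, olaEncodeAux, h32, hd]
    show olaEncodeAux (2 + k) (wrapFrom TQ 3 k) ++ [(-2 : ℤ)] = _
    rw [ih, List.replicate_succ']
    simp

lemma encode_TD (k : ℕ) : (wrapFrom TD 3 k).olaEncode = 0 :: 0 :: List.replicate k (-1 : ℤ) := by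
  have : (wrapFrom TD 3 k).numLeaves - 1 = 2 + k := by
    rw [numLeaves_wrapFrom]; show 3 + k - 1 = 2 + k; omega
  rw [olaEncode, this, encodeAux_TD]; rfl

lemma encode_TQ (k : ℕ) : (wrapFrom TQ 3 k).olaEncode = 0 :: -1 :: List.replicate k (-2 : ℤ) := by
  have : (wrapFrom TQ 3 k).numLeaves - 1 = 2 + k := by
    rw [numLeaves_wrapFrom]; show 3 + k - 1 = 2 + k; omega
  rw [olaEncode, this, encodeAux_TQ]; rfl

lemma countP_rep : ∀ k : ℕ, List.countP (fun p => !decide (p.1 = p.2))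
    (List.replicate k ((-1 : ℤ), (-2 : ℤ))) = k := by
  intro k
  induction k with
  | zero => rfl
  | succ k ih => simp [List.replicate_succ, List.countP_cons, ih]

lemma isRBT_wrap (X : BTree) (hc : X.Canonical) (h0 : X.minLeaf = 0)
    (hl : X.leafMultiset = Multiset.range 3) (k : ℕ) :
    BTree.IsRBT (k + 3) (wrapFrom X 3 k) := by
  constructor
  · exact canonical_wrapFrom X hc h0 k 3 (by omega)
  · rw [leafMultiset_wrapFrom, hl, ← range_add_rangeFrom]
    congr 1; omega

end OLAAux

/-- For every `n ≥ 3` there exist leaf-ordered rooted binary trees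
`T, T'` on `n` leaves that differ by a single NNI move and attain the maximal OLA
distance `d_OLA(T, T') = n - 2`: specifically the trees with OLA encodings
`(0, 0, -1, -1, ..., -1)` and `(0, -1, -2, -2, ..., -2)`, whose encodings differ in
all `n - 2` entries after the first. -/
theorem exists_nni_neighbors_max_ola_dist (n : ℕ) (hn : 3 ≤ n) :
    ∃ T T' : BTree, BTree.IsRBT n T ∧ BTree.IsRBT n T' ∧ IsNNIMove T T' ∧
      BTree.olaEncode T = 0 :: 0 :: List.replicate (n - 3) (-1 : ℤ) ∧
      BTree.olaEncode T' = 0 :: (-1) :: List.replicate (n - 3) (-2 : ℤ) ∧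
      olaDist T T' = n - 2 := by
  obtain ⟨k, rfl⟩ : ∃ k, n = k + 3 := ⟨n - 3, by omega⟩
  open OLAAux in
  refine ⟨wrapFrom TD 3 k, wrapFrom TQ 3 k, ?_, ?_, ?_, ?_, ?_, ?_⟩
  · exact isRBT_wrap TD (by simp [TD, BTree.Canonical, BTree.minLeaf]) rfl (by decide) k
  · exact isRBT_wrap TQ (by simp [TQ, BTree.Canonical, BTree.minLeaf]) rfl (by decide) k
  · refine ⟨ctxFrom 3 k, .leaf 0, .leaf 2, .leaf 1, ?_, ?_⟩
    · rw [fill_ctxFrom]; exact treeEquiv_refl _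
    · rw [fill_ctxFrom]; exact treeEquiv_refl _
  · rw [encode_TD]; norm_num
  · rw [encode_TQ]; norm_num
  · rw [olaDist, encode_TD, encode_TQ]
    simp [List.countP_cons, countP_rep k]
end
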